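/- arXiv:2508.06712 — 3 statements merged into one kernel-verified Lean document; each statement's English description precedes it below -/
import Mathlib

section
/- Let J : ℤ_p → [0,∞) be radial and integrable, extended by zero outside ℤ_p. For an integer r ≤ 0, k ∈ {1,…,p−1}, and b ∈ ℚ_p/ℤ_p with bp^{-r} ∈ ℤ_p, define the wavelet Ψ_{rbk}(x) = p^{-r/2} χ_p(p^{-1}k(p^r x − b)) 1_{|p^r x − b|_p ≤ 1}. Then J ∗ Ψ_{rbk} − Ψ_{rbk} = (Ĵ(p^{1−r}) − 1) Ψ_{rbk}, i.e., Ψ_{rbk} is an eigenfunction of the operator 𝑱φ = J∗φ − φ with eigenvalue Ĵ(p^{1−r}) − 1. -/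
/-! Up to the constant factor of `Ψ`, the convolution `(J ∗ Ψ)(x)` is the integral of the radial
`J` against a character `y ↦ χ(θ y)` with `‖θ‖ = p^{1-r}` over the ball `‖y - c‖ ≤ p^r` on which
`Ψ(x - ·)` lives. Translation by `z₀ = p^{-r}` preserves every such ball, preserves the norm of
every point outside `‖y‖ ≤ p^r`, and multiplies the character by `χ(θ z₀) ≠ 1`. Hence the integral
vanishes over balls not containing `0` and over the complement of `‖y‖ ≤ p^r`. On `‖y‖ ≤ p^r`
itself it depends only on `‖θ‖`: the character is `1` on the open ball, `J` is constant on the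
sphere, and the character integrates to `0` over the whole ball. So the integral is `Ĵ(p^{1-r})`
when `Ψ(x) ≠ 0` and `0` otherwise. -/

open MeasureTheory Metric Filter Topology

namespace AddChar

lemma continuous_of_eq_one_of_mem_nhds {G M : Type*} [AddGroup G] [TopologicalSpace G]
    [IsTopologicalAddGroup G] [Monoid M] [TopologicalSpace M] (χ : AddChar G M) {U : Set G}
    (hU : U ∈ 𝓝 0) (h : ∀ u ∈ U, χ u = 1) : Continuous χ := by
  refine continuous_iff_continuousAt.2 fun x => ?_
  have hshift : Tendsto (fun y => -x + y) (𝓝 x) (𝓝 0) :=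
    (continuous_const_add (-x)).tendsto' x 0 (neg_add_cancel x)
  have hloc : ∀ᶠ y in 𝓝 x, χ x = χ y := by
    filter_upwards [hshift hU] with y hy
    rw [← add_neg_cancel_left x y, map_add_eq_mul, h _ hy, mul_one]
  exact continuousAt_const.congr hloc

end AddChar

namespace IsUltrametricDist

variable {E : Type*} [SeminormedAddCommGroup E] [IsUltrametricDist E] {c y z : E} {ρ : ℝ}

lemma add_mem_closedBall_iff (hz : ‖z‖ ≤ ρ) : y + z ∈ closedBall c ρ ↔ y ∈ closedBall c ρ := by
  have hball : closedBall y ρ = closedBall (y + z) ρ :=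
    closedBall_eq_of_mem (by simpa [dist_eq_norm] using hz)
  rw [mem_closedBall_comm, ← hball, mem_closedBall_comm]

lemma norm_eq_of_mem_closedBall (hc : ρ < ‖c‖) (hy : y ∈ closedBall c ρ) : ‖y‖ = ‖c‖ := by
  have hlt : ‖y - c‖ < ‖c‖ := (mem_closedBall_iff_norm.1 hy).trans_lt hc
  rw [← sub_add_cancel y c, norm_add_eq_max_of_norm_ne_norm hlt.ne, max_eq_right hlt.le]

end IsUltrametricDist

lemma setIntegral_eq_zero_of_map_add_eq_mul {G : Type*} [AddGroup G] [MeasurableSpace G]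
    [MeasurableAdd G] {μ : Measure G} [μ.IsAddRightInvariant] {s : Set G} (hs : MeasurableSet s)
    {z : G} (hsz : ∀ y, y + z ∈ s ↔ y ∈ s) {f : G → ℂ} {γ : ℂ} (hγ : γ ≠ 1)
    (hf : ∀ y ∈ s, f (y + z) = γ * f y) : ∫ y in s, f y ∂μ = 0 := by
  have hinv : ∫ y in s, f (y + z) ∂μ = ∫ y in s, f y ∂μ := by
    have := (measurePreserving_add_right μ z).setIntegral_preimage_emb
      (MeasurableEquiv.addRight z).measurableEmbedding f s
    rwa [show (· + z) ⁻¹' s = s from Set.ext hsz] at this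
  have hmul : ∫ y in s, f (y + z) ∂μ = γ * ∫ y in s, f y ∂μ := by
    rw [← integral_const_mul]
    exact setIntegral_congr_fun hs hf
  have : (γ - 1) * ∫ y in s, f y ∂μ = 0 := by rw [sub_mul, one_mul, ← hmul, hinv, sub_self]
  exact (mul_eq_zero.1 this).resolve_left (sub_ne_zero.2 hγ)

lemma setIntegral_mul_addChar_eq_zero {R : Type*} [Ring R] [MeasurableSpace R] [MeasurableAdd R]
    {μ : Measure R} [μ.IsAddRightInvariant] (χ : AddChar R ℂ) {s : Set R} (hs : MeasurableSet s)
    {θ z : R} (hsz : ∀ y, y + z ∈ s ↔ y ∈ s) (hχ : χ (θ * z) ≠ 1) {f : R → ℂ}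
    (hf : ∀ y ∈ s, f (y + z) = f y) : ∫ y in s, f y * χ (θ * y) ∂μ = 0 :=
  setIntegral_eq_zero_of_map_add_eq_mul hs hsz hχ fun y hy => by
    rw [hf y hy, mul_add, AddChar.map_add_eq_mul]; ring

def IsRadial {E F : Type*} [Norm E] (f : E → F) : Prop :=
  ∀ x y, ‖x‖ = ‖y‖ → f x = f y

namespace Padic

variable {p : ℕ} [Fact p.Prime]

lemma norm_natCast_eq_one_of_pos_of_lt {k : ℕ} (hk₀ : 0 < k) (hkp : k < p) :
    ‖(k : ℚ_[p])‖ = 1 :=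
  norm_natCast_eq_one_iff.2 <| (Fact.out : p.Prime).coprime_iff_not_dvd.2 <|
    Nat.not_dvd_of_pos_of_lt hk₀ hkp

lemma norm_zpow_mul_sub_le_one_iff (r : ℤ) (u b : ℚ_[p]) :
    ‖(p : ℚ_[p]) ^ r * u - b‖ ≤ 1 ↔ ‖u - (p : ℚ_[p]) ^ (-r) * b‖ ≤ (p : ℝ) ^ r := by
  have hp : (0 : ℝ) < p := Nat.cast_pos.2 (Fact.out : p.Prime).pos
  have hpQ : (p : ℚ_[p]) ≠ 0 := Nat.cast_ne_zero.2 (Fact.out : p.Prime).ne_zero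
  rw [show (p : ℚ_[p]) ^ r * u - b = (p : ℚ_[p]) ^ r * (u - (p : ℚ_[p]) ^ (-r) * b) by
    rw [mul_sub, ← mul_assoc, ← zpow_add₀ hpQ, add_neg_cancel, zpow_zero, one_mul],
    norm_mul, norm_p_zpow, zpow_neg, inv_mul_le_iff₀ (zpow_pos hp r), mul_one]

noncomputable def kozyrevWavelet (χ : AddChar ℚ_[p] ℂ) (r : ℤ) (k : ℕ) (b x : ℚ_[p]) : ℂ :=
  (((p : ℝ) ^ (-(r : ℝ) / 2) : ℝ) : ℂ) *
    χ ((p : ℚ_[p])⁻¹ * (k : ℚ_[p]) * ((p : ℚ_[p]) ^ r * x - b)) *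
    (if ‖(p : ℚ_[p]) ^ r * x - b‖ ≤ 1 then 1 else 0)

lemma exists_kozyrevWavelet_sub_eq_indicator (χ : AddChar ℚ_[p] ℂ) (r : ℤ) (k : ℕ)
    (b x : ℚ_[p]) :
    ∃ A : ℂ, ∀ y, kozyrevWavelet χ r k b (x - y) =
      A * (closedBall (x - (p : ℚ_[p]) ^ (-r) * b) ((p : ℝ) ^ r)).indicator
        (fun y => χ (-((p : ℚ_[p]) ^ (r - 1) * k) * y)) y := by
  refine ⟨(((p : ℝ) ^ (-(r : ℝ) / 2) : ℝ) : ℂ) *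
    χ ((p : ℚ_[p])⁻¹ * k * ((p : ℚ_[p]) ^ r * x - b)), fun y => ?_⟩
  have harg : (p : ℚ_[p])⁻¹ * k * ((p : ℚ_[p]) ^ r * (x - y) - b) =
      (p : ℚ_[p])⁻¹ * k * ((p : ℚ_[p]) ^ r * x - b) + -((p : ℚ_[p]) ^ (r - 1) * k) * y := by
    rw [zpow_sub_one₀ (Nat.cast_ne_zero.2 (Fact.out : p.Prime).ne_zero)]
    ring
  have hsupp : ‖(p : ℚ_[p]) ^ r * (x - y) - b‖ ≤ 1 ↔
      y ∈ closedBall (x - (p : ℚ_[p]) ^ (-r) * b) ((p : ℝ) ^ r) := by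
    rw [norm_zpow_mul_sub_le_one_iff, mem_closedBall_iff_norm', sub_right_comm]
  by_cases hy : y ∈ closedBall (x - (p : ℚ_[p]) ^ (-r) * b) ((p : ℝ) ^ r)
  · rw [kozyrevWavelet, Set.indicator_of_mem hy, if_pos (hsupp.2 hy), harg,
      AddChar.map_add_eq_mul]
    ring
  · rw [kozyrevWavelet, Set.indicator_of_notMem hy, if_neg (mt hsupp.1 hy)]
    ring

variable {χ : AddChar ℚ_[p] ℂ}

lemma norm_addChar_eq_one (hχ₁ : ∀ x : ℚ_[p], ‖x‖ ≤ 1 → χ x = 1) (w : ℚ_[p]) : ‖χ w‖ = 1 := by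
  have hp : (1 : ℝ) < p := Nat.one_lt_cast.2 (Fact.out : p.Prime).one_lt
  obtain ⟨n, hn⟩ := pow_unbounded_of_one_lt ‖w‖ hp
  refine Complex.norm_eq_one_of_pow_eq_one (n := p ^ n) ?_
    (pow_ne_zero n (Fact.out : p.Prime).ne_zero)
  rw [← AddChar.map_nsmul_eq_pow, nsmul_eq_mul]
  refine hχ₁ _ ?_
  rw [norm_mul, Nat.cast_pow, norm_pow, norm_p, inv_pow, inv_mul_le_one₀ (by positivity)]
  exact hn.le

lemma continuous_addChar (hχ₁ : ∀ x : ℚ_[p], ‖x‖ ≤ 1 → χ x = 1) : Continuous χ :=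
  χ.continuous_of_eq_one_of_mem_nhds (closedBall_mem_nhds 0 one_pos) fun u hu =>
    hχ₁ u (mem_closedBall_zero_iff.1 hu)

lemma addChar_mul_eq_one_of_norm_lt (hχ₁ : ∀ x : ℚ_[p], ‖x‖ ≤ 1 → χ x = 1) {r : ℤ}
    {θ y : ℚ_[p]} (hθ : ‖θ‖ = (p : ℝ) ^ (1 - r)) (hy : ‖y‖ < (p : ℝ) ^ r) : χ (θ * y) = 1 := by
  have hp : (0 : ℝ) < p := Nat.cast_pos.2 (Fact.out : p.Prime).pos
  refine hχ₁ _ ?_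
  have hlt : ‖θ * y‖ < (p : ℝ) ^ (1 : ℤ) := by
    rw [norm_mul, hθ, ← sub_add_cancel (1 : ℤ) r, zpow_add₀ hp.ne', sub_add_cancel]
    exact mul_lt_mul_of_pos_left hy (zpow_pos hp _)
  simpa using (norm_lt_pow_iff_norm_le_pow_sub_one _ 1).1 hlt

lemma addChar_mul_zpow_neg_ne_one (hχ₂ : ∀ x : ℚ_[p], 1 < ‖x‖ → χ x ≠ 1) {r : ℤ} {θ : ℚ_[p]}
    (hθ : ‖θ‖ = (p : ℝ) ^ (1 - r)) : χ (θ * (p : ℚ_[p]) ^ (-r)) ≠ 1 := by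
  have hp : (1 : ℝ) < p := Nat.one_lt_cast.2 (Fact.out : p.Prime).one_lt
  refine hχ₂ _ ?_
  rwa [norm_mul, hθ, norm_p_zpow, neg_neg, ← zpow_add₀ (by positivity), sub_add_cancel, zpow_one]

variable [MeasurableSpace ℚ_[p]] [BorelSpace ℚ_[p]]

lemma integrable_mul_addChar (hχ₁ : ∀ x : ℚ_[p], ‖x‖ ≤ 1 → χ x = 1) {ν : Measure ℚ_[p]}
    {J : ℚ_[p] → ℂ} (hJ : Integrable J ν) (θ : ℚ_[p]) :
    Integrable (fun y => J y * χ (θ * y)) ν :=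
  hJ.mul_bdd ((continuous_addChar hχ₁).comp (continuous_const_mul θ)).aestronglyMeasurable
    (Eventually.of_forall fun _ => (norm_addChar_eq_one hχ₁ _).le)

variable {μ : Measure ℚ_[p]} [μ.IsAddHaarMeasure] {J : ℚ_[p] → ℂ}

lemma setIntegral_radial_mul_addChar_eq_zero (hχ₂ : ∀ x : ℚ_[p], 1 < ‖x‖ → χ x ≠ 1)
    (hJ : IsRadial J) {r : ℤ} {θ : ℚ_[p]} (hθ : ‖θ‖ = (p : ℝ) ^ (1 - r)) {s : Set ℚ_[p]}
    (hs : MeasurableSet s) (hsz : ∀ y, y + (p : ℚ_[p]) ^ (-r) ∈ s ↔ y ∈ s)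
    (hnorm : ∀ y ∈ s, (p : ℝ) ^ r < ‖y‖) : ∫ y in s, J y * χ (θ * y) ∂μ = 0 :=
  setIntegral_mul_addChar_eq_zero χ hs hsz (addChar_mul_zpow_neg_ne_one hχ₂ hθ) fun y hy =>
    hJ _ _ <| IsUltrametricDist.norm_eq_of_mem_closedBall (hnorm y hy) <| by
      simp [dist_eq_norm]

lemma integral_radial_mul_addChar_eq_setIntegral_closedBall
    (hχ₁ : ∀ x : ℚ_[p], ‖x‖ ≤ 1 → χ x = 1) (hχ₂ : ∀ x : ℚ_[p], 1 < ‖x‖ → χ x ≠ 1)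
    (hJ : IsRadial J) (hJi : Integrable J μ) {r : ℤ} {θ : ℚ_[p]}
    (hθ : ‖θ‖ = (p : ℝ) ^ (1 - r)) :
    ∫ y, J y * χ (θ * y) ∂μ = ∫ y in closedBall 0 ((p : ℝ) ^ r), J y * χ (θ * y) ∂μ := by
  rw [← integral_add_compl measurableSet_closedBall (integrable_mul_addChar hχ₁ hJi θ),
    setIntegral_radial_mul_addChar_eq_zero hχ₂ hJ hθ measurableSet_closedBall.compl, add_zero]
  · exact fun y => not_congr <|
      IsUltrametricDist.add_mem_closedBall_iff (by simp)
  · exact fun y hy => by simpa using hy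

lemma setIntegral_closedBall_radial_mul_addChar_eq
    (hχ₁ : ∀ x : ℚ_[p], ‖x‖ ≤ 1 → χ x = 1) (hχ₂ : ∀ x : ℚ_[p], 1 < ‖x‖ → χ x ≠ 1)
    (hJ : IsRadial J) {r : ℤ} (hJi : IntegrableOn J (closedBall 0 ((p : ℝ) ^ r)) μ)
    {θ₁ θ₂ : ℚ_[p]} (hθ₁ : ‖θ₁‖ = (p : ℝ) ^ (1 - r)) (hθ₂ : ‖θ₂‖ = (p : ℝ) ^ (1 - r)) :
    ∫ y in closedBall 0 ((p : ℝ) ^ r), J y * χ (θ₁ * y) ∂μ =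
      ∫ y in closedBall 0 ((p : ℝ) ^ r), J y * χ (θ₂ * y) ∂μ := by
  set B := closedBall (0 : ℚ_[p]) ((p : ℝ) ^ r)
  set z₀ := (p : ℚ_[p]) ^ (-r)
  have hz₀ : ‖z₀‖ = (p : ℝ) ^ r := by simp [z₀]
  have hB : IntegrableOn (fun _ => (1 : ℂ)) B μ :=
    integrableOn_const (isCompact_closedBall 0 _).measure_lt_top.ne
  -- The character sums over `B` vanish, by invariance under translation by `z₀`.
  have hχB : ∀ θ : ℚ_[p], ‖θ‖ = (p : ℝ) ^ (1 - r) → ∫ y in B, χ (θ * y) ∂μ = 0 := fun θ hθ => by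
    simpa using setIntegral_mul_addChar_eq_zero (μ := μ) (f := fun _ => 1) χ
      measurableSet_closedBall (fun y => IsUltrametricDist.add_mem_closedBall_iff hz₀.le)
      (addChar_mul_zpow_neg_ne_one hχ₂ hθ) fun _ _ => rfl
  -- On the open ball both characters are `1`, and on the sphere `J` is the constant `J z₀`.
  have hcongr : ∀ y ∈ B, J y * χ (θ₁ * y) - J y * χ (θ₂ * y) =
      J z₀ * (χ (θ₁ * y) - χ (θ₂ * y)) := by
    intro y hy
    rcases (mem_closedBall_zero_iff.1 hy).lt_or_eq with hlt | heq
    · simp [addChar_mul_eq_one_of_norm_lt hχ₁ hθ₁ hlt, addChar_mul_eq_one_of_norm_lt hχ₁ hθ₂ hlt]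
    · rw [hJ y z₀ (heq.trans hz₀.symm), mul_sub]
  have hχi : ∀ θ, IntegrableOn (fun y => χ (θ * y)) B μ := fun θ => by
    simpa [IntegrableOn] using integrable_mul_addChar hχ₁ hB θ
  rw [← sub_eq_zero, ← integral_sub (integrable_mul_addChar hχ₁ hJi θ₁)
    (integrable_mul_addChar hχ₁ hJi θ₂), setIntegral_congr_fun measurableSet_closedBall hcongr,
    integral_const_mul, integral_sub (hχi θ₁) (hχi θ₂), hχB θ₁ hθ₁, hχB θ₂ hθ₂, sub_zero, mul_zero]

lemma setIntegral_closedBall_radial_mul_addChar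
    (hχ₁ : ∀ x : ℚ_[p], ‖x‖ ≤ 1 → χ x = 1) (hχ₂ : ∀ x : ℚ_[p], 1 < ‖x‖ → χ x ≠ 1)
    (hJ : IsRadial J) (hJi : Integrable J μ) {r : ℤ} {θ θ' : ℚ_[p]}
    (hθ : ‖θ‖ = (p : ℝ) ^ (1 - r)) (hθ' : ‖θ'‖ = (p : ℝ) ^ (1 - r)) (c : ℚ_[p]) :
    ∫ y in closedBall c ((p : ℝ) ^ r), J y * χ (θ' * y) ∂μ =
      if ‖c‖ ≤ (p : ℝ) ^ r then ∫ y, J y * χ (θ * y) ∂μ else 0 := by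
  split_ifs with hc
  · rw [IsUltrametricDist.closedBall_eq_of_mem (y := 0) (by rwa [mem_closedBall, dist_zero_left]),
      integral_radial_mul_addChar_eq_setIntegral_closedBall hχ₁ hχ₂ hJ hJi hθ,
      setIntegral_closedBall_radial_mul_addChar_eq hχ₁ hχ₂ hJ hJi.integrableOn hθ' hθ]
  · refine setIntegral_radial_mul_addChar_eq_zero hχ₂ hJ hθ' measurableSet_closedBall
      (fun y => IsUltrametricDist.add_mem_closedBall_iff (by simp)) fun y hy => ?_
    rw [IsUltrametricDist.norm_eq_of_mem_closedBall (not_le.1 hc) hy]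
    exact not_le.1 hc

end Padic

theorem wavelet_eigenfunction_of_convolution_operator_general
    (p : ℕ) [Fact p.Prime]
    [MeasurableSpace ℚ_[p]] [BorelSpace ℚ_[p]]
    (μ : Measure ℚ_[p]) [μ.IsAddHaarMeasure]
    (χ : AddChar ℚ_[p] ℂ)
    (hχ₁ : ∀ x : ℚ_[p], ‖x‖ ≤ 1 → χ x = 1)
    (hχ₂ : ∀ x : ℚ_[p], 1 < ‖x‖ → χ x ≠ 1)
    (J : ℚ_[p] → ℝ)
    (hJrad : ∀ x y : ℚ_[p], ‖x‖ = ‖y‖ → J x = J y)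
    (hJsupp : ∀ x : ℚ_[p], 1 < ‖x‖ → J x = 0)
    (hJint : IntegrableOn J {x : ℚ_[p] | ‖x‖ ≤ 1} μ)
    (r : ℤ)
    (k : ℕ) (hk₁ : 1 ≤ k) (hk₂ : k ≤ p - 1)
    (b : ℚ_[p])
    -- the wavelet
    (Ψ : ℚ_[p] → ℂ)
    (hΨ : Ψ = fun x => (((p : ℝ) ^ (-(r : ℝ) / 2) : ℝ) : ℂ) *
        χ ((p : ℚ_[p])⁻¹ * (k : ℚ_[p]) * ((p : ℚ_[p]) ^ r * x - b)) *
        (if ‖(p : ℚ_[p]) ^ r * x - b‖ ≤ 1 then 1 else 0))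
    -- the value `Ĵ(p^{1-r})` of the radial Fourier transform of `J`
    (hatJ : ℂ)
    (hhatJ : hatJ = ∫ x in {x : ℚ_[p] | ‖x‖ ≤ 1},
        (J x : ℂ) * χ ((p : ℚ_[p]) ^ (r - 1) * x) ∂μ) :
    ∀ x : ℚ_[p], (∫ y, (J y : ℂ) * Ψ (x - y) ∂μ) - Ψ x = (hatJ - 1) * Ψ x := by
  intro x
  set θ : ℚ_[p] := (p : ℚ_[p]) ^ (r - 1)
  set θ' : ℚ_[p] := -(θ * k)
  have hθ : ‖θ‖ = (p : ℝ) ^ (1 - r) := by rw [Padic.norm_p_zpow, neg_sub]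
  have hθ' : ‖θ'‖ = (p : ℝ) ^ (1 - r) := by
    rw [norm_neg, norm_mul, Padic.norm_natCast_eq_one_of_pos_of_lt hk₁ (by omega), mul_one, hθ]
  have hJ : IsRadial fun y => (J y : ℂ) := fun x y h => congrArg _ (hJrad x y h)
  have hJi : Integrable (fun y => (J y : ℂ)) μ :=
    ((integrableOn_iff_integrable_of_support_subset fun y hy =>
      not_lt.1 (mt (hJsupp y) hy)).1 hJint).ofReal
  have hhatJ' : hatJ = ∫ y, (J y : ℂ) * χ (θ * y) ∂μ :=
    hhatJ.trans <| setIntegral_eq_integral_of_forall_compl_eq_zero fun y hy => by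
      simp [hJsupp y (not_le.1 hy)]
  obtain rfl : Ψ = Padic.kozyrevWavelet χ r k b := hΨ
  obtain ⟨A, hΨ'⟩ := Padic.exists_kozyrevWavelet_sub_eq_indicator χ r k b x
  set c := x - (p : ℚ_[p]) ^ (-r) * b
  have hΨx : Padic.kozyrevWavelet χ r k b x = A * if ‖c‖ ≤ (p : ℝ) ^ r then 1 else 0 := by
    classical
    simpa [Set.indicator_apply] using hΨ' 0
  have hconv : ∀ y, (J y : ℂ) * Padic.kozyrevWavelet χ r k b (x - y) =
      A * (closedBall c ((p : ℝ) ^ r)).indicator (fun y => (J y : ℂ) * χ (θ' * y)) y := fun y => by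
    rw [hΨ' y, Set.indicator_mul_right, mul_left_comm]
  rw [integral_congr_ae (Eventually.of_forall hconv), integral_const_mul,
    integral_indicator measurableSet_closedBall,
    Padic.setIntegral_closedBall_radial_mul_addChar hχ₁ hχ₂ hJ hJi hθ hθ' c, ← hhatJ', hΨx]
  split_ifs <;> ring

/-- The Kozyrev wavelet
`Ψ_{rbk}(x) = p^{-r/2} χ_p(p^{-1}k(p^r x − b)) 1_{|p^r x − b|_p ≤ 1}` is an
eigenfunction of `𝑱φ = J∗φ − φ` with eigenvalue `Ĵ(p^{1−r}) − 1`, where `Ĵ` is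
the (radial) Fourier transform of `J` evaluated at any point of norm `p^{1-r}`. -/
theorem wavelet_eigenfunction_of_convolution_operator
    (p : ℕ) [Fact p.Prime]
    [MeasurableSpace ℚ_[p]] [BorelSpace ℚ_[p]]
    (μ : Measure ℚ_[p]) [μ.IsAddHaarMeasure]
    (hμ : μ {x : ℚ_[p] | ‖x‖ ≤ 1} = 1)
    (χ : AddChar ℚ_[p] ℂ)
    (hχ₁ : ∀ x : ℚ_[p], ‖x‖ ≤ 1 → χ x = 1)
    (hχ₂ : ∀ x : ℚ_[p], 1 < ‖x‖ → χ x ≠ 1)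
    (J : ℚ_[p] → ℝ)
    (hJpos : ∀ x, 0 ≤ J x)
    (hJrad : ∀ x y : ℚ_[p], ‖x‖ = ‖y‖ → J x = J y)
    (hJsupp : ∀ x : ℚ_[p], 1 < ‖x‖ → J x = 0)
    (hJint : IntegrableOn J {x : ℚ_[p] | ‖x‖ ≤ 1} μ)
    (r : ℤ) (hr : r ≤ 0)
    (k : ℕ) (hk₁ : 1 ≤ k) (hk₂ : k ≤ p - 1)
    (b : ℚ_[p]) (hb : ‖(p : ℚ_[p]) ^ (-r) * b‖ ≤ 1)
    -- the wavelet
    (Ψ : ℚ_[p] → ℂ)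
    (hΨ : Ψ = fun x => (((p : ℝ) ^ (-(r : ℝ) / 2) : ℝ) : ℂ) *
        χ ((p : ℚ_[p])⁻¹ * (k : ℚ_[p]) * ((p : ℚ_[p]) ^ r * x - b)) *
        (if ‖(p : ℚ_[p]) ^ r * x - b‖ ≤ 1 then 1 else 0))
    -- the value `Ĵ(p^{1-r})` of the radial Fourier transform of `J`
    (hatJ : ℂ)
    (hhatJ : hatJ = ∫ x in {x : ℚ_[p] | ‖x‖ ≤ 1},
        (J x : ℂ) * χ ((p : ℚ_[p]) ^ (r - 1) * x) ∂μ) :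
    ∀ x : ℚ_[p], (∫ y, (J y : ℂ) * Ψ (x - y) ∂μ) - Ψ x = (hatJ - 1) * Ψ x :=
  wavelet_eigenfunction_of_convolution_operator_general p μ χ hχ₁ hχ₂ J hJrad hJsupp hJint r k hk₁
    hk₂ b Ψ hΨ hatJ hhatJ
end

section
/- Let J : ℤ_p → [0,∞) be radial and integrable. For l ≥ 1 and K ∈ G_l = ℤ_p/p^lℤ_p, the convolution satisfies J ∗ 1_{K+p^lℤ_p} = p^{-l} Σ_{I ∈ G_l, I ≠ K} J(|I−K|_p) 1_{I+p^lℤ_p} + ( ∫_{p^lℤ_p} J(|y|_p) dy ) · 1_{K+p^lℤ_p} on ℤ_p. Consequently the space 𝒟_l(ℤ_p) spanned by { 1_{I+p^lℤ_p} : I ∈ G_l } is invariant under φ ↦ J ∗ φ. -/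
/-! In the ultrametric field `ℚ_p`, `(J ∗ 1_{k + p^l ℤ_p})(x)` is the integral of `J` over the
ball `x - k + p^l ℤ_p`. Two balls of radius `p^{-l}` are equal or disjoint, so this integral only
depends on the class of `x` modulo `p^l`, and it vanishes for `|x|_p > 1` because `J` does there;
hence it expands as `Σ_n G(n - k) 1_{n + p^l ℤ_p}` with `G(z) = ∫_{z + p^l ℤ_p} J`. For `n ≠ k`
the ball `n - k + p^l ℤ_p` avoids `0`, so all its points have norm `|n - k|_p`, the radial `J` is
constant there and `G(n - k) = p^{-l} J(n - k)`, the `p^l` translates of `p^l ℤ_p` tiling `ℤ_p`;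
for `n = k` the ball is `p^l ℤ_p` itself. Invariance of the span follows by linearity. -/

open MeasureTheory Metric

noncomputable def closedBallIndicator {E : Type*} [SeminormedAddCommGroup E] (r : ℝ) (c x : E) :
    ℝ :=
  if ‖x - c‖ ≤ r then 1 else 0

section NormedGroup

variable {E : Type*} [NormedAddCommGroup E]

lemma closedBallIndicator_eq_indicator (r : ℝ) (c : E) :
    closedBallIndicator r c = (closedBall c r).indicator 1 := by
  ext x
  simp [closedBallIndicator, Set.indicator, dist_eq_norm]

lemma closedBallIndicator_sub (r : ℝ) (c x y : E) :
    closedBallIndicator r c (x - y) = closedBallIndicator r (x - c) y := by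
  rw [closedBallIndicator, closedBallIndicator, ← norm_neg (x - y - c)]
  congr 3
  abel

lemma mul_closedBallIndicator (f : E → ℝ) (r : ℝ) (c y : E) :
    f y * closedBallIndicator r c y = (closedBall c r).indicator f y := by
  simp [closedBallIndicator_eq_indicator, ← Set.indicator_mul_right]

variable [MeasurableSpace E] [BorelSpace E] (μ : Measure E)

lemma integral_closedBallIndicator (r : ℝ) (c : E) :
    ∫ x, closedBallIndicator r c x ∂μ = μ.real (closedBall c r) := by
  rw [closedBallIndicator_eq_indicator]
  exact integral_indicator_one measurableSet_closedBall

lemma integrable_closedBallIndicator [ProperSpace E] [IsFiniteMeasureOnCompacts μ] (r : ℝ)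
    (c : E) : Integrable (closedBallIndicator r c) μ := by
  rw [closedBallIndicator_eq_indicator]
  exact (integrableOn_const measure_closedBall_lt_top.ne).integrable_indicator
    measurableSet_closedBall

lemma integral_mul_closedBallIndicator_sub (f : E → ℝ) (r : ℝ) (c x : E) :
    ∫ y, f y * closedBallIndicator r c (x - y) ∂μ = ∫ y in closedBall (x - c) r, f y ∂μ := by
  simp_rw [closedBallIndicator_sub, mul_closedBallIndicator]
  exact integral_indicator measurableSet_closedBall

variable {μ} in
lemma MeasureTheory.Integrable.mul_closedBallIndicator_sub {f : E → ℝ} (hf : Integrable f μ)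
    (r : ℝ) (c x : E) : Integrable (fun y => f y * closedBallIndicator r c (x - y)) μ := by
  simp_rw [closedBallIndicator_sub, mul_closedBallIndicator]
  exact hf.indicator measurableSet_closedBall

end NormedGroup

namespace IsUltrametricDist

variable {E : Type*} [NormedAddCommGroup E] [IsUltrametricDist E]

lemma norm_le_of_norm_sub_le {x y : E} {r : ℝ} (hxy : ‖x - y‖ ≤ r) (hy : ‖y‖ ≤ r) : ‖x‖ ≤ r := by
  simpa using (norm_add_le_max (x - y) y).trans (max_le hxy hy)

lemma norm_eq_of_norm_sub_lt {x c : E} (h : ‖x - c‖ < ‖c‖) : ‖x‖ = ‖c‖ := by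
  simpa [max_eq_right h.le] using norm_add_eq_max_of_norm_ne_norm h.ne

lemma setIntegral_closedBall_of_radial [MeasurableSpace E] [BorelSpace E] (μ : Measure E)
    [μ.IsAddHaarMeasure] {f : E → ℝ} (hf : ∀ x y, ‖x‖ = ‖y‖ → f x = f y) {c : E} {r : ℝ}
    (hr : r < ‖c‖) : ∫ y in closedBall c r, f y ∂μ = μ.real (closedBall 0 r) * f c := by
  have hconst : ∀ y ∈ closedBall c r, f y = f c := fun y hy =>
    hf _ _ (norm_eq_of_norm_sub_lt ((mem_closedBall_iff_norm.mp hy).trans_lt hr))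
  rw [setIntegral_congr_fun measurableSet_closedBall hconst, setIntegral_const, smul_eq_mul,
    Measure.addHaar_real_closedBall_center]

end IsUltrametricDist

namespace Padic

variable {p : ℕ} [Fact p.Prime]

lemma norm_natCast_le_one (n : ℕ) : ‖(n : ℚ_[p])‖ ≤ 1 := by
  simpa using norm_int_le_one (p := p) n

lemma zpow_neg_natCast_le_one (l : ℕ) : (p : ℝ) ^ (-(l : ℤ)) ≤ 1 :=
  zpow_le_one_of_nonpos₀ (by exact_mod_cast (Fact.out : p.Prime).one_le) (by simp)

lemma zpow_neg_lt_norm_natCast_sub_natCast {l n k : ℕ} (hn : n < p ^ l) (hk : k < p ^ l)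
    (hne : n ≠ k) : (p : ℝ) ^ (-(l : ℤ)) < ‖(n : ℚ_[p]) - k‖ := by
  rw [← not_le, ← Int.cast_natCast n, ← Int.cast_natCast k, ← Int.cast_sub,
    norm_int_le_pow_iff_dvd]
  intro hdvd
  have hn' : (n : ℤ) < (p : ℤ) ^ l := by exact_mod_cast hn
  have hk' : (k : ℤ) < (p : ℤ) ^ l := by exact_mod_cast hk
  have hlt : |(n : ℤ) - k| < (p : ℤ) ^ l := abs_sub_lt_iff.mpr ⟨by omega, by omega⟩
  exact hne (by have := Int.eq_zero_of_abs_lt_dvd hdvd hlt; omega)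

lemma exists_norm_sub_natCast_le {x : ℚ_[p]} (hx : ‖x‖ ≤ 1) (l : ℕ) :
    ∃ n < p ^ l, ‖x - n‖ ≤ (p : ℝ) ^ (-(l : ℤ)) := by
  set z : ℤ_[p] := ⟨x, hx⟩
  refine ⟨z.appr l, z.appr_lt l, ?_⟩
  exact_mod_cast (PadicInt.norm_le_pow_iff_mem_span_pow _ l).mpr (z.appr_spec l)

lemma eq_of_norm_sub_natCast_le {x : ℚ_[p]} {l n m : ℕ} (hn : n < p ^ l) (hm : m < p ^ l)
    (hxn : ‖x - n‖ ≤ (p : ℝ) ^ (-(l : ℤ))) (hxm : ‖x - m‖ ≤ (p : ℝ) ^ (-(l : ℤ))) :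
    n = m := by
  by_contra hne
  refine (zpow_neg_lt_norm_natCast_sub_natCast hn hm hne).not_ge ?_
  rw [← dist_eq_norm] at hxn hxm ⊢
  exact (IsUltrametricDist.dist_triangle_max (n : ℚ_[p]) x m).trans
    (max_le (by rwa [dist_comm]) hxm)

lemma sum_smul_closedBallIndicator_natCast {l : ℕ} {h : ℚ_[p] → ℝ}
    (hconst : ∀ x y : ℚ_[p], ‖x - y‖ ≤ (p : ℝ) ^ (-(l : ℤ)) → h x = h y)
    (hout : ∀ x : ℚ_[p], 1 < ‖x‖ → h x = 0) :
    ∑ n ∈ Finset.range (p ^ l), h n • closedBallIndicator ((p : ℝ) ^ (-(l : ℤ))) (n : ℚ_[p])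
      = h := by
  ext x
  simp only [Finset.sum_apply, Pi.smul_apply, smul_eq_mul, closedBallIndicator, mul_ite,
    mul_one, mul_zero]
  by_cases hx : ‖x‖ ≤ 1
  · obtain ⟨n, hn, hxn⟩ := exists_norm_sub_natCast_le hx l
    rw [Finset.sum_eq_single_of_mem n (Finset.mem_range.mpr hn), if_pos hxn,
      hconst x n hxn]
    intro m hm hmn
    exact if_neg fun hxm => hmn (eq_of_norm_sub_natCast_le (Finset.mem_range.mp hm) hn hxm hxn)
  · rw [hout x (not_le.mp hx)]
    refine Finset.sum_eq_zero fun m _ => if_neg fun hxm => hx ?_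
    exact IsUltrametricDist.norm_le_of_norm_sub_le (hxm.trans (zpow_neg_natCast_le_one l))
      (norm_natCast_le_one m)

variable (p : ℕ) [Fact p.Prime] in
/-- The space `𝒟_l(ℤ_p)`. -/
def ballIndicatorSpan (l : ℕ) : Submodule ℝ (ℚ_[p] → ℝ) :=
  Submodule.span ℝ
    {f | ∃ n ∈ Finset.range (p ^ l), f = closedBallIndicator ((p : ℝ) ^ (-(l : ℤ))) (n : ℚ_[p])}

lemma ballIndicatorSpan_eq_span_image (l : ℕ) :
    ballIndicatorSpan p l = Submodule.span ℝ ((fun n : ℕ =>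
      closedBallIndicator ((p : ℝ) ^ (-(l : ℤ))) (n : ℚ_[p])) '' Finset.range (p ^ l)) := by
  unfold ballIndicatorSpan
  congr 1
  ext f
  simp [eq_comm]

variable [MeasurableSpace ℚ_[p]] [BorelSpace ℚ_[p]] (μ : Measure ℚ_[p]) [μ.IsAddHaarMeasure]

lemma measureReal_closedBall_zpow_neg (hμ : μ (closedBall 0 1) = 1) (l : ℕ) :
    μ.real (closedBall (0 : ℚ_[p]) ((p : ℝ) ^ (-(l : ℤ)))) = (p : ℝ) ^ (-(l : ℤ)) := by
  -- `1_{ℤ_p}` is the sum of the `p ^ l` indicators of the balls `n + p^l ℤ_p`; integrate it.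
  have hunit : ∑ n ∈ Finset.range (p ^ l),
      closedBallIndicator 1 (0 : ℚ_[p]) n • closedBallIndicator ((p : ℝ) ^ (-(l : ℤ))) (n : ℚ_[p])
      = closedBallIndicator 1 0 := by
    refine sum_smul_closedBallIndicator_natCast (fun x y hxy => ?_) fun x hx => ?_
    · have hxy : ‖x - y‖ ≤ 1 := hxy.trans (zpow_neg_natCast_le_one l)
      have hyx : ‖y - x‖ ≤ 1 := by rwa [norm_sub_rev]
      simp only [closedBallIndicator, sub_zero]
      exact if_congr ⟨IsUltrametricDist.norm_le_of_norm_sub_le hyx,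
        IsUltrametricDist.norm_le_of_norm_sub_le hxy⟩ rfl rfl
    · simp [closedBallIndicator, hx]
  have hone (n : ℕ) : closedBallIndicator 1 (0 : ℚ_[p]) n = 1 :=
    if_pos (by simpa using norm_natCast_le_one n)
  have hint := congrArg (fun g => ∫ x, g x ∂μ) hunit
  simp only [hone, one_smul, Finset.sum_apply] at hint
  rw [integral_finsetSum _ fun n _ => integrable_closedBallIndicator μ _ _] at hint
  have hball : μ.real (closedBall (0 : ℚ_[p]) 1) = 1 := by simp [measureReal_def, hμ]
  simp only [integral_closedBallIndicator, Measure.addHaar_real_closedBall_center,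
    Finset.sum_const, Finset.card_range, nsmul_eq_mul, hball] at hint
  rw [eq_inv_of_mul_eq_one_right hint, zpow_neg, zpow_natCast, Nat.cast_pow]

variable {J : ℚ_[p] → ℝ}

lemma setIntegral_closedBall_sub_eq_sum (hJrad : ∀ x y : ℚ_[p], ‖x‖ = ‖y‖ → J x = J y)
    (hJsupp : ∀ x : ℚ_[p], 1 < ‖x‖ → J x = 0) (l : ℕ) {c : ℚ_[p]} (hc : ‖c‖ ≤ 1) :
    (fun x => ∫ y in closedBall (x - c) ((p : ℝ) ^ (-(l : ℤ))), J y ∂μ)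
      = ∑ n ∈ Finset.range (p ^ l), (∫ y in closedBall (n - c) ((p : ℝ) ^ (-(l : ℤ))), J y ∂μ) •
          closedBallIndicator ((p : ℝ) ^ (-(l : ℤ))) (n : ℚ_[p]) := by
  refine (sum_smul_closedBallIndicator_natCast (fun x y hxy => ?_) fun x hx => ?_).symm
  · have hmem : x - c ∈ closedBall (y - c) ((p : ℝ) ^ (-(l : ℤ))) := by
      rwa [mem_closedBall_iff_norm, sub_sub_sub_cancel_right]
    rw [IsUltrametricDist.closedBall_eq_of_mem hmem]
  · have hxc : ‖x - c‖ = ‖x‖ :=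
      IsUltrametricDist.norm_eq_of_norm_sub_lt (by simpa using hc.trans_lt hx)
    rw [IsUltrametricDist.setIntegral_closedBall_of_radial μ hJrad
      ((zpow_neg_natCast_le_one l).trans_lt (hxc ▸ hx)), hJsupp _ (hxc ▸ hx), mul_zero]

lemma integral_mul_closedBallIndicator_sub_eq (hμ : μ (closedBall 0 1) = 1)
    (hJrad : ∀ x y : ℚ_[p], ‖x‖ = ‖y‖ → J x = J y) (hJsupp : ∀ x : ℚ_[p], 1 < ‖x‖ → J x = 0)
    {l k : ℕ} (hk : k < p ^ l) (x : ℚ_[p]) :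
    ∫ y, J y * closedBallIndicator ((p : ℝ) ^ (-(l : ℤ))) (k : ℚ_[p]) (x - y) ∂μ
      = (p : ℝ) ^ (-(l : ℤ)) * ∑ n ∈ (Finset.range (p ^ l)).erase k,
            J (n - k) * closedBallIndicator ((p : ℝ) ^ (-(l : ℤ))) (n : ℚ_[p]) x
        + (∫ y in closedBall 0 ((p : ℝ) ^ (-(l : ℤ))), J y ∂μ) *
            closedBallIndicator ((p : ℝ) ^ (-(l : ℤ))) (k : ℚ_[p]) x := by
  have hoff : ∀ n ∈ (Finset.range (p ^ l)).erase k,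
      ∫ y in closedBall ((n : ℚ_[p]) - k) ((p : ℝ) ^ (-(l : ℤ))), J y ∂μ
        = (p : ℝ) ^ (-(l : ℤ)) * J (n - k) := fun n hn => by
    obtain ⟨hnk, hn⟩ := Finset.mem_erase.mp hn
    rw [IsUltrametricDist.setIntegral_closedBall_of_radial μ hJrad
      (zpow_neg_lt_norm_natCast_sub_natCast (Finset.mem_range.mp hn) hk hnk),
      measureReal_closedBall_zpow_neg μ hμ]
  rw [integral_mul_closedBallIndicator_sub,
    congrFun (setIntegral_closedBall_sub_eq_sum μ hJrad hJsupp l (norm_natCast_le_one k)) x,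
    Finset.sum_apply, ← Finset.add_sum_erase _ _ (Finset.mem_range.mpr hk), add_comm,
    Finset.sum_congr rfl fun n hn => by rw [Pi.smul_apply, hoff n hn], Finset.mul_sum]
  simp only [sub_self, Pi.smul_apply, smul_eq_mul, mul_assoc]

lemma integral_mul_sub_mem_ballIndicatorSpan (hJint : Integrable J μ)
    (hJrad : ∀ x y : ℚ_[p], ‖x‖ = ‖y‖ → J x = J y) (hJsupp : ∀ x : ℚ_[p], 1 < ‖x‖ → J x = 0)
    (l : ℕ) {φ : ℚ_[p] → ℝ} (hφ : φ ∈ ballIndicatorSpan p l) :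
    (fun x => ∫ y, J y * φ (x - y) ∂μ) ∈ ballIndicatorSpan p l := by
  rw [ballIndicatorSpan_eq_span_image] at hφ ⊢
  obtain ⟨a, rfl⟩ := (Submodule.mem_span_image_finset_iff_exists_fun' ℝ).mp hφ
  have hlin : (fun x => ∫ y, J y * (∑ k ∈ Finset.range (p ^ l),
      a k • closedBallIndicator ((p : ℝ) ^ (-(l : ℤ))) (k : ℚ_[p])) (x - y) ∂μ)
      = ∑ k ∈ Finset.range (p ^ l), a k •
          fun x => ∫ y in closedBall (x - k) ((p : ℝ) ^ (-(l : ℤ))), J y ∂μ := by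
    ext x
    simp only [Finset.sum_apply, Pi.smul_apply, smul_eq_mul, Finset.mul_sum, mul_left_comm _ (a _)]
    rw [integral_finsetSum _ fun k _ => (hJint.mul_closedBallIndicator_sub _ _ x).const_mul _]
    simp only [integral_const_mul, integral_mul_closedBallIndicator_sub]
  rw [hlin]
  refine Submodule.sum_mem _ fun k _ => Submodule.smul_mem _ _ ?_
  rw [setIntegral_closedBall_sub_eq_sum μ hJrad hJsupp l (norm_natCast_le_one k)]
  exact Submodule.sum_mem _ fun n hn => Submodule.smul_mem _ _ (Submodule.subset_span ⟨n, hn, rfl⟩)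

end Padic

open Padic

theorem convolution_ball_indicator_formula_and_invariance_general
    (p : ℕ) [Fact p.Prime]
    [MeasurableSpace ℚ_[p]] [BorelSpace ℚ_[p]]
    (μ : Measure ℚ_[p]) [μ.IsAddHaarMeasure]
    (hμ : μ {x : ℚ_[p] | ‖x‖ ≤ 1} = 1)
    (J : ℚ_[p] → ℝ)
    (hJrad : ∀ x y : ℚ_[p], ‖x‖ = ‖y‖ → J x = J y)
    (hJsupp : ∀ x : ℚ_[p], 1 < ‖x‖ → J x = 0)
    (hJint : IntegrableOn J {x : ℚ_[p] | ‖x‖ ≤ 1} μ)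
    (l : ℕ) :
    (∀ k₀ ∈ Finset.range (p ^ l), ∀ x : ℚ_[p], ‖x‖ ≤ 1 →
      ∫ y, J y * (if ‖(x - y) - (k₀ : ℚ_[p])‖ ≤ (p : ℝ) ^ (-(l : ℤ)) then (1:ℝ) else 0) ∂μ
        = (p : ℝ) ^ (-(l : ℤ)) *
            ∑ n ∈ (Finset.range (p ^ l)).erase k₀,
              J ((n : ℚ_[p]) - (k₀ : ℚ_[p])) *
                (if ‖x - (n : ℚ_[p])‖ ≤ (p : ℝ) ^ (-(l : ℤ)) then (1:ℝ) else 0)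
          + (∫ y in {y : ℚ_[p] | ‖y‖ ≤ (p : ℝ) ^ (-(l : ℤ))}, J y ∂μ) *
              (if ‖x - (k₀ : ℚ_[p])‖ ≤ (p : ℝ) ^ (-(l : ℤ)) then (1:ℝ) else 0)) ∧
    (∀ φ : ℚ_[p] → ℝ,
      φ ∈ Submodule.span ℝ
        {f : ℚ_[p] → ℝ | ∃ n ∈ Finset.range (p ^ l),
          f = fun x => if ‖x - (n : ℚ_[p])‖ ≤ (p : ℝ) ^ (-(l : ℤ)) then (1:ℝ) else 0} →
      (fun x => ∫ y, J y * φ (x - y) ∂μ) ∈ Submodule.span ℝ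
        {f : ℚ_[p] → ℝ | ∃ n ∈ Finset.range (p ^ l),
          f = fun x => if ‖x - (n : ℚ_[p])‖ ≤ (p : ℝ) ^ (-(l : ℤ)) then (1:ℝ) else 0}) := by
  have hball (r : ℝ) : closedBall (0 : ℚ_[p]) r = {x | ‖x‖ ≤ r} :=
    Set.ext fun _ => mem_closedBall_zero_iff
  refine ⟨fun k hk x _ => ?_, fun φ hφ => ?_⟩
  · rw [← hball]
    exact integral_mul_closedBallIndicator_sub_eq μ (by rwa [hball]) hJrad hJsupp
      (Finset.mem_range.mp hk) x
  · have hJ : Integrable J μ :=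
      hJint.integrable_of_forall_notMem_eq_zero fun x hx => hJsupp x (not_le.mp hx)
    exact integral_mul_sub_mem_ballIndicatorSpan μ hJ hJrad hJsupp l hφ

/-- For radial integrable `J : ℤ_p → [0,∞)` (extended by zero),
`l ≥ 1` and a representative `K` of `G_l = ℤ_p/p^lℤ_p` (represented by
`k₀ ∈ {0,…,p^l−1}`), on `ℤ_p` we have
`J ∗ 1_{K+p^lℤ_p} = p^{-l} Σ_{I ≠ K} J(|I−K|_p) 1_{I+p^lℤ_p}
  + (∫_{p^lℤ_p} J) · 1_{K+p^lℤ_p}`.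
Consequently the span `𝒟_l(ℤ_p)` of the ball indicators is invariant under
`φ ↦ J ∗ φ`. -/
theorem convolution_ball_indicator_formula_and_invariance
    (p : ℕ) [Fact p.Prime]
    [MeasurableSpace ℚ_[p]] [BorelSpace ℚ_[p]]
    (μ : Measure ℚ_[p]) [μ.IsAddHaarMeasure]
    (hμ : μ {x : ℚ_[p] | ‖x‖ ≤ 1} = 1)
    (J : ℚ_[p] → ℝ)
    (hJpos : ∀ x, 0 ≤ J x)
    (hJrad : ∀ x y : ℚ_[p], ‖x‖ = ‖y‖ → J x = J y)
    (hJsupp : ∀ x : ℚ_[p], 1 < ‖x‖ → J x = 0)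
    (hJint : IntegrableOn J {x : ℚ_[p] | ‖x‖ ≤ 1} μ)
    (l : ℕ) (hl : 1 ≤ l) :
    (∀ k₀ ∈ Finset.range (p ^ l), ∀ x : ℚ_[p], ‖x‖ ≤ 1 →
      ∫ y, J y * (if ‖(x - y) - (k₀ : ℚ_[p])‖ ≤ (p : ℝ) ^ (-(l : ℤ)) then (1:ℝ) else 0) ∂μ
        = (p : ℝ) ^ (-(l : ℤ)) *
            ∑ n ∈ (Finset.range (p ^ l)).erase k₀,
              J ((n : ℚ_[p]) - (k₀ : ℚ_[p])) *
                (if ‖x - (n : ℚ_[p])‖ ≤ (p : ℝ) ^ (-(l : ℤ)) then (1:ℝ) else 0)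
          + (∫ y in {y : ℚ_[p] | ‖y‖ ≤ (p : ℝ) ^ (-(l : ℤ))}, J y ∂μ) *
              (if ‖x - (k₀ : ℚ_[p])‖ ≤ (p : ℝ) ^ (-(l : ℤ)) then (1:ℝ) else 0)) ∧
    (∀ φ : ℚ_[p] → ℝ,
      φ ∈ Submodule.span ℝ
        {f : ℚ_[p] → ℝ | ∃ n ∈ Finset.range (p ^ l),
          f = fun x => if ‖x - (n : ℚ_[p])‖ ≤ (p : ℝ) ^ (-(l : ℤ)) then (1:ℝ) else 0} →
      (fun x => ∫ y, J y * φ (x - y) ∂μ) ∈ Submodule.span ℝ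
        {f : ℚ_[p] → ℝ | ∃ n ∈ Finset.range (p ^ l),
          f = fun x => if ‖x - (n : ℚ_[p])‖ ≤ (p : ℝ) ^ (-(l : ℤ)) then (1:ℝ) else 0}) :=
  convolution_ball_indicator_formula_and_invariance_general p μ hμ J hJrad hJsupp hJint l
end

section
/- Let Ĵ : ℚ_p → ℝ be a radial, ℤ_p-periodic, locally constant function with Ĵ(0) = 1 and |Ĵ| ≤ 1. For t > 0 define Z₀(x,t) as the inverse Fourier transform (as a distribution) of e^{−t(1−Ĵ(|ξ|_p))}. Then for x ∈ ℤ_p \ {0}, Z₀(x,t) = 1 + Σ_{j=1}^{1+ord(x)} e^{−t(1−Ĵ(p^j))}( p^j 1_{|x|_p ≤ p^{−j}} − p^{j−1} 1_{|x|_p ≤ p^{−(j−1)}} ), the sum being finite since the j-th term vanishes for j ≥ 2 + ord(x). -/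
/-!
A radial, `ℤ_p`-periodic symbol `φ` is constant on the unit ball and on each sphere
`‖ξ‖ = p ^ j`, so its inverse Fourier integral over the ball `‖ξ‖ ≤ p ^ m` equals
`φ 0 * I 0 + ∑_{j=1}^m φ (p ^ (-j)) * (I j - I (j - 1))`, where `I j = ∫_{‖ξ‖ ≤ p^j} χ (-(ξ x))`.
Translating by a point of the ball shows that `I j` is the volume `p ^ j` of the ball when
`χ (-(· x))` is trivial on it, i.e. when `‖x‖ ≤ p ^ (-j)`, and `0` otherwise. For `x ≠ 0` the terms
with `j > ord x + 1` therefore vanish and the truncated integrals are eventually constant. The heat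
kernel is the case `φ = exp (-t (1 - Ĵ))`.
-/

open MeasureTheory Filter Metric

section Shells

variable {α : Type*} [MeasurableSpace α] {μ : Measure α} {f g : α → ℂ}

theorem setIntegral_eq_add_mul_sub_of_eqOn_sdiff {s t : Set α} (hs : MeasurableSet s)
    (ht : MeasurableSet t) (hst : s ⊆ t) (hf : IntegrableOn f t μ) (hg : IntegrableOn g t μ)
    {a : ℂ} (hfg : Set.EqOn f (fun x => a * g x) (t \ s)) :
    ∫ x in t, f x ∂μ = ∫ x in s, f x ∂μ + a * (∫ x in t, g x ∂μ - ∫ x in s, g x ∂μ) := by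
  rw [← setIntegral_sdiff hs hg hst, ← integral_const_mul,
    ← setIntegral_congr_fun (ht.diff hs) hfg, setIntegral_sdiff hs hf hst]
  ring

theorem setIntegral_eq_add_sum_of_eqOn_shells {B : ℤ → Set α} (hB : Monotone B)
    (hBm : ∀ j, MeasurableSet (B j)) (hf : ∀ j, IntegrableOn f (B j) μ)
    (hg : ∀ j, IntegrableOn g (B j) μ) {a : ℤ → ℂ} {k : ℤ}
    (hfg : ∀ j, k < j → Set.EqOn f (fun x => a j * g x) (B j \ B (j - 1)))
    {m : ℤ} (hkm : k ≤ m) :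
    ∫ x in B m, f x ∂μ = ∫ x in B k, f x ∂μ +
      ∑ j ∈ Finset.Ioc k m, a j * (∫ x in B j, g x ∂μ - ∫ x in B (j - 1), g x ∂μ) := by
  induction m, hkm using Int.leInduction with
  | base => simp
  | succ m hkm ih =>
    have hstep := setIntegral_eq_add_mul_sub_of_eqOn_sdiff (hBm m) (hBm (m + 1))
      (hB (by omega)) (hf _) (hg _) (by simpa using hfg (m + 1) (by omega))
    rw [← Finset.insert_Ioc_right_eq_Ioc_add_one hkm, Finset.sum_insert (by simp),
      add_sub_cancel_right, hstep, ih]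
    ring

end Shells

theorem isLocallyConstant_of_map_add_eq {E X : Type*} [SeminormedAddCommGroup E] {r : ℝ}
    (hr : 0 < r) {h : E → X} (hh : ∀ a b, ‖b‖ ≤ r → h (a + b) = h a) : IsLocallyConstant h :=
  (IsLocallyConstant.iff_eventually_eq h).2 fun a => by
    filter_upwards [closedBall_mem_nhds a hr] with b hb
    rw [← add_sub_cancel a b]
    exact hh a (b - a) (mem_closedBall_iff_norm.1 hb)

theorem setOf_norm_le_eq_closedBall {E : Type*} [SeminormedAddGroup E] (r : ℝ) :
    {x : E | ‖x‖ ≤ r} = closedBall 0 r := by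
  ext x; simp

theorem AddChar.setIntegral_addSubgroup_eq_zero {G : Type*} [AddGroup G] [MeasurableSpace G]
    [MeasurableAdd G] (μ : Measure G) [μ.IsAddRightInvariant] (H : AddSubgroup G)
    (ψ : AddChar G ℂ) {c : G} (hc : c ∈ H) (hψc : ψ c ≠ 1) : ∫ ξ in H, ψ ξ ∂μ = 0 := by
  have hH : (· + c) ⁻¹' (H : Set G) = H := by ext ξ; exact H.add_mem_cancel_right hc
  have hshift := (measurePreserving_add_right μ c).setIntegral_preimage_emb
    (measurableEmbedding_addRight c) ψ H
  simp only [hH, AddChar.map_add_eq_mul, integral_mul_const] at hshift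
  by_contra hne
  exact hψc ((mul_eq_left₀ hne).1 hshift)

namespace Padic

variable {p : ℕ} [Fact p.Prime]

theorem one_lt_prime_cast : (1 : ℝ) < p := by exact_mod_cast (Fact.out : p.Prime).one_lt

theorem closedBall_zpow_add_one_eq_biUnion (n : ℤ) :
    closedBall (0 : ℚ_[p]) ((p : ℝ) ^ (n + 1)) =
      ⋃ k ∈ Finset.range p,
        closedBall ((k : ℚ_[p]) * (p : ℚ_[p]) ^ (-(n + 1))) ((p : ℝ) ^ n) := by
  have hp : (0 : ℝ) < p := zero_lt_one.trans one_lt_prime_cast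
  have hc : ‖(p : ℚ_[p]) ^ (-(n + 1))‖ = (p : ℝ) ^ (n + 1) := by rw [norm_p_zpow, neg_neg]
  ext ξ
  simp only [Set.mem_iUnion, Finset.mem_range, exists_prop, mem_closedBall_zero_iff]
  constructor
  · intro hξ
    have hu : ‖ξ * (p : ℚ_[p]) ^ (n + 1)‖ ≤ 1 := by
      rw [norm_mul, norm_p_zpow, ← le_div_iff₀ (zpow_pos hp _), one_div, ← zpow_neg, neg_neg]
      exact hξ
    obtain ⟨k, hk, hdigit⟩ := PadicInt.exists_mem_range (⟨_, hu⟩ : ℤ_[p])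
    rw [IsLocalRing.mem_maximalIdeal, PadicInt.mem_nonunits] at hdigit
    refine ⟨k, hk, ?_⟩
    rw [mem_closedBall, dist_eq_norm, norm_le_pow_iff_norm_lt_pow_add_one]
    calc ‖ξ - k * (p : ℚ_[p]) ^ (-(n + 1))‖
        = ‖ξ * (p : ℚ_[p]) ^ (n + 1) - k‖ * (p : ℝ) ^ (n + 1) := by
          rw [← hc, ← norm_mul, sub_mul, mul_assoc,
            ← zpow_add₀ (by simp [(Fact.out : p.Prime).ne_zero]), add_neg_cancel, zpow_zero,
            mul_one]
      _ < 1 * (p : ℝ) ^ (n + 1) := by gcongr; exact hdigit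
      _ = _ := one_mul _
  · rintro ⟨k, -, hξ⟩
    have hkc : (k : ℚ_[p]) * (p : ℚ_[p]) ^ (-(n + 1)) ∈ closedBall 0 ((p : ℝ) ^ (n + 1)) := by
      rw [mem_closedBall_zero_iff, norm_mul, hc]
      exact mul_le_of_le_one_left (zpow_pos hp _).le (IsUltrametricDist.norm_natCast_le_one _ k)
    rw [← mem_closedBall_zero_iff, IsUltrametricDist.closedBall_eq_of_mem hkc]
    exact closedBall_subset_closedBall (zpow_le_zpow_right₀ one_lt_prime_cast.le (by omega)) hξ

theorem pairwiseDisjoint_closedBall_digits (n : ℤ) :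
    (Finset.range p : Set ℕ).PairwiseDisjoint
      fun k => closedBall ((k : ℚ_[p]) * (p : ℚ_[p]) ^ (-(n + 1))) ((p : ℝ) ^ n) := by
  intro k hk l hl hkl
  rw [Function.onFun, Set.disjoint_left]
  intro ξ hξk hξl
  have hclose : ‖(((k : ℤ) - l : ℤ) : ℚ_[p]) * (p : ℚ_[p]) ^ (-(n + 1))‖ ≤ (p : ℝ) ^ n := by
    have := (IsUltrametricDist.dist_triangle_max _ ξ _).trans
      (max_le (mem_closedBall'.1 hξk) (mem_closedBall.1 hξl))
    rwa [dist_eq_norm, ← sub_mul, ← Int.cast_natCast, ← Int.cast_natCast (R := ℚ_[p]) l,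
      ← Int.cast_sub] at this
  rw [norm_le_pow_iff_norm_lt_pow_add_one, norm_mul, norm_p_zpow, neg_neg] at hclose
  have hdvd : (p : ℤ) ∣ (k : ℤ) - l :=
    norm_intCast_lt_one_iff.1 (lt_of_mul_lt_mul_right (by simpa using hclose) (by positivity))
  simp only [Finset.coe_range, Set.mem_Iio] at hk hl
  have := Int.eq_zero_of_abs_lt_dvd hdvd (by rw [abs_sub_lt_iff]; omega)
  omega

theorem closedBall_zpow_sdiff_closedBall_zpow_sub_one (j : ℤ) :
    closedBall (0 : ℚ_[p]) ((p : ℝ) ^ j) \ closedBall 0 ((p : ℝ) ^ (j - 1)) =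
      sphere 0 ((p : ℝ) ^ j) := by
  ext ξ
  rw [Set.mem_sdiff, mem_closedBall_zero_iff, mem_closedBall_zero_iff, mem_sphere_zero_iff_norm,
    norm_le_pow_iff_norm_lt_pow_add_one ξ (j - 1), sub_add_cancel, not_lt]
  exact ⟨fun h => le_antisymm h.1 h.2, fun h => ⟨h.le, h.ge⟩⟩

theorem measure_closedBall_zpow_add_one [MeasurableSpace ℚ_[p]] [BorelSpace ℚ_[p]]
    (μ : Measure ℚ_[p]) [μ.IsAddHaarMeasure] (n : ℤ) :
    μ (closedBall 0 ((p : ℝ) ^ (n + 1))) = p * μ (closedBall 0 ((p : ℝ) ^ n)) := by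
  rw [closedBall_zpow_add_one_eq_biUnion, measure_biUnion_finset
    (pairwiseDisjoint_closedBall_digits n) fun _ _ => measurableSet_closedBall]
  simp [μ.addHaar_closedBall_center]

theorem measureReal_closedBall_zpow [MeasurableSpace ℚ_[p]] [BorelSpace ℚ_[p]]
    (μ : Measure ℚ_[p]) [μ.IsAddHaarMeasure] (hμ : μ (closedBall 0 1) = 1) (n : ℤ) :
    μ.real (closedBall (0 : ℚ_[p]) ((p : ℝ) ^ n)) = (p : ℝ) ^ n := by
  have hp : (p : ℝ) ≠ 0 := (zero_lt_one.trans one_lt_prime_cast).ne'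
  have hstep (n : ℤ) : μ.real (closedBall 0 ((p : ℝ) ^ (n + 1))) =
      p * μ.real (closedBall 0 ((p : ℝ) ^ n)) := by
    simp [measureReal_def, measure_closedBall_zpow_add_one]
  induction n using Int.induction_on with
  | zero => simp [measureReal_def, hμ]
  | succ n ih => rw [hstep, ih, zpow_add_one₀ hp, mul_comm]
  | pred n ih =>
    rw [← sub_add_cancel (-(n : ℤ)) 1, hstep, zpow_add_one₀ hp] at ih
    exact mul_left_cancel₀ hp (by rw [ih, mul_comm])

theorem setIntegral_closedBall_char_neg_mul [MeasurableSpace ℚ_[p]] [BorelSpace ℚ_[p]]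
    (μ : Measure ℚ_[p]) [μ.IsAddHaarMeasure] (hμ : μ (closedBall 0 1) = 1)
    (χ : AddChar ℚ_[p] ℂ) (hχ₁ : ∀ x : ℚ_[p], ‖x‖ ≤ 1 → χ x = 1)
    (hχ₂ : ∀ x : ℚ_[p], 1 < ‖x‖ → χ x ≠ 1) (x : ℚ_[p]) (n : ℤ) :
    ∫ ξ in closedBall 0 ((p : ℝ) ^ n), χ (-(ξ * x)) ∂μ =
      if ‖x‖ ≤ (p : ℝ) ^ (-n) then (p : ℂ) ^ n else 0 := by
  have hp : (0 : ℝ) < p := zero_lt_one.trans one_lt_prime_cast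
  have hpn : (p : ℝ) ^ n * (p : ℝ) ^ (-n) = 1 := by
    rw [← zpow_add₀ hp.ne', add_neg_cancel, zpow_zero]
  split_ifs with hx
  · have hone : Set.EqOn (fun ξ => χ (-(ξ * x))) 1 (closedBall 0 ((p : ℝ) ^ n)) := fun ξ hξ =>
      hχ₁ _ <| by
        rw [norm_neg, norm_mul, ← hpn]
        exact mul_le_mul (mem_closedBall_zero_iff.1 hξ) hx (norm_nonneg _) (zpow_pos hp _).le
    rw [setIntegral_congr_fun measurableSet_closedBall hone, Pi.one_def, setIntegral_const,
      measureReal_closedBall_zpow μ hμ]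
    simp
  · let H := (IsUltrametricDist.closedBall_openAddSubgroup ℚ_[p] (zpow_pos hp n)).toAddSubgroup
    let ψ := χ.compAddMonoidHom (-AddMonoidHom.mulRight x)
    refine ψ.setIntegral_addSubgroup_eq_zero μ H (c := (p : ℚ_[p]) ^ (-n)) ?_ (hχ₂ _ ?_)
    · show _ ∈ closedBall (0 : ℚ_[p]) _
      rw [mem_closedBall_zero_iff, norm_p_zpow, neg_neg]
    · show 1 < ‖-((p : ℚ_[p]) ^ (-n) * x)‖
      rw [norm_neg, norm_mul, norm_p_zpow, neg_neg, ← hpn]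
      exact mul_lt_mul_of_pos_left (not_le.1 hx) (zpow_pos hp _)

theorem norm_le_zpow_neg_iff_le_valuation {x : ℚ_[p]} (hx : x ≠ 0) (n : ℤ) :
    ‖x‖ ≤ (p : ℝ) ^ (-n) ↔ n ≤ x.valuation := by
  rw [norm_eq_zpow_neg_valuation hx, zpow_le_zpow_iff_right₀ one_lt_prime_cast, neg_le_neg_iff]

theorem setIntegral_closedBall_radial_mul_char_neg_mul [MeasurableSpace ℚ_[p]] [BorelSpace ℚ_[p]]
    (μ : Measure ℚ_[p]) [μ.IsAddHaarMeasure] (hμ : μ (closedBall 0 1) = 1)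
    (χ : AddChar ℚ_[p] ℂ) (hχ₁ : ∀ x : ℚ_[p], ‖x‖ ≤ 1 → χ x = 1)
    (hχ₂ : ∀ x : ℚ_[p], 1 < ‖x‖ → χ x ≠ 1) {φ : ℚ_[p] → ℂ}
    (hrad : ∀ ξ η : ℚ_[p], ‖ξ‖ = ‖η‖ → φ ξ = φ η)
    (hper : ∀ ξ ξ₀ : ℚ_[p], ‖ξ₀‖ ≤ 1 → φ (ξ + ξ₀) = φ ξ) {x : ℚ_[p]} (hx : ‖x‖ ≤ 1)
    {m : ℤ} (hm : 0 ≤ m) :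
    ∫ ξ in closedBall 0 ((p : ℝ) ^ m), φ ξ * χ (-(ξ * x)) ∂μ =
      φ 0 + ∑ j ∈ Finset.Icc 1 m, φ ((p : ℚ_[p]) ^ (-j)) *
        ((if ‖x‖ ≤ (p : ℝ) ^ (-j) then (p : ℂ) ^ j else 0)
          - (if ‖x‖ ≤ (p : ℝ) ^ (-(j - 1)) then (p : ℂ) ^ (j - 1) else 0)) := by
  have hχ_cont : Continuous χ := (isLocallyConstant_of_map_add_eq one_pos
    fun a b hb => by rw [AddChar.map_add_eq_mul, hχ₁ b hb, mul_one]).continuous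
  have hφ_cont : Continuous φ := (isLocallyConstant_of_map_add_eq one_pos hper).continuous
  have hcore : Set.EqOn (fun ξ => φ ξ * χ (-(ξ * x))) (fun ξ => φ 0 * χ (-(ξ * x)))
      (closedBall 0 ((p : ℝ) ^ (0 : ℤ))) := fun ξ hξ => by
    simp only [← hper 0 ξ (by simpa using hξ), zero_add]
  have hshell (j : ℤ) : Set.EqOn (fun ξ => φ ξ * χ (-(ξ * x)))
      (fun ξ => φ ((p : ℚ_[p]) ^ (-j)) * χ (-(ξ * x)))
      (closedBall 0 ((p : ℝ) ^ j) \ closedBall 0 ((p : ℝ) ^ (j - 1))) := fun ξ hξ => by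
    rw [closedBall_zpow_sdiff_closedBall_zpow_sub_one, mem_sphere_zero_iff_norm] at hξ
    simp only [hrad ξ ((p : ℚ_[p]) ^ (-j)) (by rw [hξ, norm_p_zpow, neg_neg])]
  have hint {f : ℚ_[p] → ℂ} (hf : Continuous f) (j : ℤ) :
      IntegrableOn f (closedBall 0 ((p : ℝ) ^ j)) μ :=
    hf.continuousOn.integrableOn_compact (isCompact_closedBall _ _)
  rw [setIntegral_eq_add_sum_of_eqOn_shells (fun i j hij => closedBall_subset_closedBall
      (zpow_le_zpow_right₀ one_lt_prime_cast.le hij)) (fun _ => measurableSet_closedBall)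
      (hint (by fun_prop)) (hint (by fun_prop)) (fun j _ => hshell j) hm,
    setIntegral_congr_fun measurableSet_closedBall hcore, integral_const_mul,
    setIntegral_closedBall_char_neg_mul μ hμ χ hχ₁ hχ₂ x 0, neg_zero, zpow_zero, if_pos hx,
    zpow_zero, mul_one, ← Finset.Icc_add_one_left_eq_Ioc, zero_add]
  simp only [setIntegral_closedBall_char_neg_mul μ hμ χ hχ₁ hχ₂]

end Padic

theorem heat_kernel_formula_general
    (p : ℕ) [Fact p.Prime]
    [MeasurableSpace ℚ_[p]] [BorelSpace ℚ_[p]]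
    (μ : Measure ℚ_[p]) [μ.IsAddHaarMeasure]
    (hμ : μ {x : ℚ_[p] | ‖x‖ ≤ 1} = 1)
    (χ : AddChar ℚ_[p] ℂ)
    (hχ₁ : ∀ x : ℚ_[p], ‖x‖ ≤ 1 → χ x = 1)
    (hχ₂ : ∀ x : ℚ_[p], 1 < ‖x‖ → χ x ≠ 1)
    (hatJ : ℚ_[p] → ℝ)
    (hrad : ∀ ξ η : ℚ_[p], ‖ξ‖ = ‖η‖ → hatJ ξ = hatJ η)
    (hper : ∀ ξ ξ₀ : ℚ_[p], ‖ξ₀‖ ≤ 1 → hatJ (ξ + ξ₀) = hatJ ξ)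
    (h0 : hatJ 0 = 1)
    (t : ℝ)
    (x : ℚ_[p]) (hx : ‖x‖ ≤ 1) (hx0 : x ≠ 0) :
    Tendsto
      (fun m : ℕ =>
        ∫ ξ in {ξ : ℚ_[p] | ‖ξ‖ ≤ (p : ℝ) ^ (m : ℕ)},
          Complex.exp (-(t : ℂ) * (1 - (hatJ ξ : ℂ))) * χ (-(ξ * x)) ∂μ)
      atTop
      (nhds (1 + ∑ j ∈ Finset.Icc (1 : ℤ) (x.valuation + 1),
        Complex.exp (-(t : ℂ) * (1 - (hatJ ((p : ℚ_[p]) ^ (-j)) : ℂ))) *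
          ((if ‖x‖ ≤ (p : ℝ) ^ (-j) then (p : ℂ) ^ j else 0)
            - (if ‖x‖ ≤ (p : ℝ) ^ (-(j - 1)) then (p : ℂ) ^ (j - 1) else 0)))) := by
  rw [setOf_norm_le_eq_closedBall] at hμ
  have hφ0 : Complex.exp (-(t : ℂ) * (1 - (hatJ 0 : ℂ))) = 1 := by simp [h0]
  refine tendsto_atTop_of_eventually_const (i₀ := (x.valuation + 1).toNat) fun m hm => ?_
  have hm' : x.valuation + 1 ≤ m := Int.toNat_le.1 hm
  rw [setOf_norm_le_eq_closedBall, ← zpow_natCast,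
    Padic.setIntegral_closedBall_radial_mul_char_neg_mul μ hμ χ hχ₁ hχ₂
      (fun ξ η h => by rw [hrad ξ η h]) (fun ξ ξ₀ h => by rw [hper ξ ξ₀ h]) hx (Nat.cast_nonneg m),
    hφ0]
  congr 1
  refine (Finset.sum_subset (Finset.Icc_subset_Icc_right hm') fun j hj hj' => ?_).symm
  simp only [Finset.mem_Icc, not_and, not_le] at hj hj'
  rw [if_neg (by rw [Padic.norm_le_zpow_neg_iff_le_valuation hx0]; omega),
    if_neg (by rw [Padic.norm_le_zpow_neg_iff_le_valuation hx0]; omega), sub_zero, mul_zero]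

/-- For a radial, `ℤ_p`-periodic symbol `Ĵ` with `Ĵ(0) = 1` and
`|Ĵ| ≤ 1`, the heat kernel `Z₀(x,t)` — the inverse Fourier transform (as a
distribution, i.e. as the limit of the truncated inverse Fourier integrals) of
`e^{−t(1−Ĵ(|ξ|_p))}` — is given, for `x ∈ ℤ_p \ {0}` and `t > 0`, by the finite
sum `1 + Σ_{j=1}^{1+ord(x)} e^{−t(1−Ĵ(p^j))}(p^j 1_{|x|_p ≤ p^{−j}} −
p^{j−1} 1_{|x|_p ≤ p^{−(j−1)}})`. -/
theorem heat_kernel_formula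
    (p : ℕ) [Fact p.Prime]
    [MeasurableSpace ℚ_[p]] [BorelSpace ℚ_[p]]
    (μ : Measure ℚ_[p]) [μ.IsAddHaarMeasure]
    (hμ : μ {x : ℚ_[p] | ‖x‖ ≤ 1} = 1)
    (χ : AddChar ℚ_[p] ℂ)
    (hχ₁ : ∀ x : ℚ_[p], ‖x‖ ≤ 1 → χ x = 1)
    (hχ₂ : ∀ x : ℚ_[p], 1 < ‖x‖ → χ x ≠ 1)
    (hatJ : ℚ_[p] → ℝ)
    (hrad : ∀ ξ η : ℚ_[p], ‖ξ‖ = ‖η‖ → hatJ ξ = hatJ η)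
    (hper : ∀ ξ ξ₀ : ℚ_[p], ‖ξ₀‖ ≤ 1 → hatJ (ξ + ξ₀) = hatJ ξ)
    (h0 : hatJ 0 = 1)
    (hbd : ∀ ξ, |hatJ ξ| ≤ 1)
    (t : ℝ) (ht : 0 < t)
    (x : ℚ_[p]) (hx : ‖x‖ ≤ 1) (hx0 : x ≠ 0) :
    Tendsto
      (fun m : ℕ =>
        ∫ ξ in {ξ : ℚ_[p] | ‖ξ‖ ≤ (p : ℝ) ^ (m : ℕ)},
          Complex.exp (-(t : ℂ) * (1 - (hatJ ξ : ℂ))) * χ (-(ξ * x)) ∂μ)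
      atTop
      (nhds (1 + ∑ j ∈ Finset.Icc (1 : ℤ) (x.valuation + 1),
        Complex.exp (-(t : ℂ) * (1 - (hatJ ((p : ℚ_[p]) ^ (-j)) : ℂ))) *
          ((if ‖x‖ ≤ (p : ℝ) ^ (-j) then (p : ℂ) ^ j else 0)
            - (if ‖x‖ ≤ (p : ℝ) ^ (-(j - 1)) then (p : ℂ) ^ (j - 1) else 0)))) :=
  heat_kernel_formula_general p μ hμ χ hχ₁ hχ₂ hatJ hrad hper h0 t x hx hx0
end
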